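/- Let M ≥ 5 and K ≥ 4 be integers. Then ∫₀^∞ x⁻¹ f_{M,4,K}(x) dx + ((M−1)/(M−2)) ∫₀^∞ x⁻¹ f_{M,3,K}(x) dx + ((M−1)/(M−3)) ∫₀^∞ x⁻¹ f_{M,2,K}(x) dx + ((M−1)/(M−4)) ∫₀^∞ x⁻¹ f_{M,1,K}(x) dx = ((M−1)/(M−4)) α_{M,K} + ((M−1)/(M−3)) [K α_{M,K−1} − (K−1) α_{M,K}] + ((M−1)/(M−2)) [ (K(K−1)/2) α_{M,K−2} − K(K−2) α_{M,K−1} + ((K−1)(K−2)/2) α_{M,K} ] + (K(K−1)(K−2)/6) α_{M,K−3} − (K(K−1)(K−3)/2) α_{M,K−2} + (K(K−2)(K−3)/2) α_{M,K−1} − ((K−1)(K−2)(K−3)/6) α_{M,K}. -/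

import Mathlib

open MeasureTheory ProbabilityTheory Filter

/-- Regularized lower incomplete gamma function `G(M,x) = (1/Γ(M)) ∫₀ˣ e^{-t} t^{M-1} dt`. -/
noncomputable def regGamma (M : ℕ) (x : ℝ) : ℝ :=
  (1 / Real.Gamma M) * ∫ t in (0:ℝ)..x, Real.exp (-t) * t ^ (M - 1)

/-- Gamma(M,1) density `g(M,x) = e^{-x} x^{M-1} / Γ(M)`. -/
noncomputable def gammaDens (M : ℕ) (x : ℝ) : ℝ :=
  Real.exp (-x) * x ^ (M - 1) / Real.Gamma M

/-- The constant `α_{M,K} = ∫₀^∞ K (e^{-x} x^{M-2} / Γ(M)) G(M,x)^{K-1} dx`. -/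
noncomputable def alphaMK (M K : ℕ) : ℝ :=
  ∫ x in Set.Ioi (0:ℝ), K * (Real.exp (-x) * x ^ (M - 2) / Real.Gamma M) * regGamma M x ^ (K - 1)

/-- Density `f_{M,r,K}` of the `r`-th largest among `K` i.i.d. Gamma(M,1) random variables. -/
noncomputable def fOrd (M r K : ℕ) (x : ℝ) : ℝ :=
  (K.factorial : ℝ) / ((K - r).factorial * (r - 1).factorial) *
    regGamma M x ^ (K - r) * (1 - regGamma M x) ^ (r - 1) * gammaDens M x

/-! For `x > 0` and `M ≥ 2`, `x⁻¹ g(M,x) = e^{-x} x^{M-2} / Γ(M)` is the weight in `α_{M,K}`.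
Expanding `(1 - G)^{r-1}` binomially turns `∫₀^∞ x⁻¹ f_{M,r,K}` into a combination of the moments
`β_j = ∫₀^∞ e^{-x} x^{M-2} G(M,x)^j / Γ(M) dx`, all finite because `0 ≤ G ≤ 1`, and
`α_{M,j+1} = (j+1) β_j`. The identity then holds separately for each `r = 1, …, 4`. -/

section
open Real Set

lemma integrableOn_exp_neg_mul_pow (n : ℕ) :
    IntegrableOn (fun t : ℝ => exp (-t) * t ^ n) (Ioi 0) := by
  simpa using GammaIntegral_convergent (s := n + 1) (by positivity)

lemma Gamma_natCast_eq_integral {M : ℕ} (hM : 1 ≤ M) :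
    Gamma M = ∫ t in Ioi 0, exp (-t) * t ^ (M - 1) := by
  obtain ⟨n, rfl⟩ := Nat.exists_eq_add_of_le' hM
  simpa using Gamma_eq_integral (s := n + 1) (by positivity)

@[fun_prop]
lemma continuous_regGamma (M : ℕ) : Continuous (regGamma M) := by
  have : Continuous fun t : ℝ => exp (-t) * t ^ (M - 1) := by fun_prop
  exact continuous_const.mul <|
    intervalIntegral.continuous_primitive (fun _ _ => this.intervalIntegrable _ _) 0

lemma regGamma_nonneg (M : ℕ) {x : ℝ} (hx : 0 ≤ x) : 0 ≤ regGamma M x :=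
  mul_nonneg (by positivity) <| intervalIntegral.integral_nonneg hx fun t ht => by
    have := ht.1; positivity

lemma regGamma_le_one {M : ℕ} (hM : 1 ≤ M) {x : ℝ} (hx : 0 ≤ x) : regGamma M x ≤ 1 := by
  have hΓ : 0 < Gamma M := Gamma_pos_of_pos (by exact_mod_cast hM)
  rw [regGamma, one_div, inv_mul_le_one₀ hΓ, Gamma_natCast_eq_integral hM,
    intervalIntegral.integral_of_le hx]
  refine setIntegral_mono_set (integrableOn_exp_neg_mul_pow _) ?_
    Ioc_subset_Ioi_self.eventuallyLE
  filter_upwards [ae_restrict_mem measurableSet_Ioi] with t ht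
  have := ht.out.le
  positivity

noncomputable def gammaDensDivX (M : ℕ) (x : ℝ) : ℝ :=
  exp (-x) * x ^ (M - 2) / Gamma M

noncomputable def regGammaMoment (M j : ℕ) : ℝ :=
  ∫ x in Ioi 0, gammaDensDivX M x * regGamma M x ^ j

lemma gammaDensDivX_nonneg (M : ℕ) {x : ℝ} (hx : 0 ≤ x) : 0 ≤ gammaDensDivX M x :=
  div_nonneg (by positivity) (Gamma_nonneg_of_nonneg M.cast_nonneg)

lemma inv_mul_gammaDens {M : ℕ} (hM : 2 ≤ M) {x : ℝ} (hx : x ≠ 0) :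
    x⁻¹ * gammaDens M x = gammaDensDivX M x := by
  obtain ⟨n, rfl⟩ := Nat.exists_eq_add_of_le' hM
  simp only [gammaDens, gammaDensDivX, show n + 2 - 1 = n + 1 by omega, Nat.add_sub_cancel,
    pow_succ]
  field_simp

lemma integrableOn_gammaDensDivX_mul_regGamma_pow {M : ℕ} (hM : 1 ≤ M) (j : ℕ) :
    IntegrableOn (fun x => gammaDensDivX M x * regGamma M x ^ j) (Ioi 0) := by
  refine ((integrableOn_exp_neg_mul_pow (M - 2)).div_const (Gamma M)).mono'
    (by unfold gammaDensDivX; fun_prop : Continuous _).aestronglyMeasurable ?_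
  filter_upwards [ae_restrict_mem measurableSet_Ioi] with x hx
  have h0 := regGamma_nonneg M hx.out.le
  have h1 := regGamma_le_one hM hx.out.le
  rw [norm_of_nonneg (mul_nonneg (gammaDensDivX_nonneg M hx.out.le) (pow_nonneg h0 j))]
  exact mul_le_of_le_one_right (gammaDensDivX_nonneg M hx.out.le) (pow_le_one₀ h0 h1)

lemma integral_inv_mul_fOrd {M : ℕ} (hM : 2 ≤ M) (r K : ℕ) :
    ∫ x in Ioi 0, x⁻¹ * fOrd M r K x
      = K.factorial / ((K - r).factorial * (r - 1).factorial) * ∫ x in Ioi 0,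
          gammaDensDivX M x * regGamma M x ^ (K - r) * (1 - regGamma M x) ^ (r - 1) := by
  rw [← integral_const_mul]
  refine setIntegral_congr_fun measurableSet_Ioi fun x hx => ?_
  rw [← inv_mul_gammaDens hM hx.out.ne', fOrd]
  ring

lemma integral_gammaDensDivX_mul_one_sub_regGamma_pow {M : ℕ} (hM : 1 ≤ M) (a n : ℕ) :
    ∫ x in Ioi 0, gammaDensDivX M x * regGamma M x ^ a * (1 - regGamma M x) ^ n
      = ∑ i ∈ Finset.range (n + 1), (-1) ^ i * n.choose i * regGammaMoment M (a + i) := by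
  calc _ = ∫ x in Ioi 0, ∑ i ∈ Finset.range (n + 1),
          (-1) ^ i * n.choose i * (gammaDensDivX M x * regGamma M x ^ (a + i)) :=
        setIntegral_congr_fun measurableSet_Ioi fun x _ => by
          rw [sub_eq_neg_add, add_pow, Finset.mul_sum]
          exact Finset.sum_congr rfl fun i _ => by ring
    _ = _ := by
      rw [integral_finsetSum _ fun i _ =>
        (integrableOn_gammaDensDivX_mul_regGamma_pow hM (a + i)).const_mul _]
      simp_rw [integral_const_mul, regGammaMoment]

lemma alphaMK_succ (M j : ℕ) : alphaMK M (j + 1) = (j + 1) * regGammaMoment M j := by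
  rw [alphaMK, regGammaMoment, ← integral_const_mul]
  refine setIntegral_congr_fun measurableSet_Ioi fun x _ => ?_
  simp only [gammaDensDivX, Nat.add_sub_cancel]
  push_cast
  ring

lemma integral_inv_mul_fOrd_one {M K : ℕ} (hM : 2 ≤ M) (hK : 1 ≤ K) :
    ∫ x in Ioi 0, x⁻¹ * fOrd M 1 K x = alphaMK M K := by
  obtain ⟨k, rfl⟩ := Nat.exists_eq_add_of_le' hK
  rw [integral_inv_mul_fOrd hM, integral_gammaDensDivX_mul_one_sub_regGamma_pow (by omega)]
  simp only [Finset.sum_range_succ, Finset.sum_range_zero, Nat.choose, Nat.factorial,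
    Nat.reduceSubDiff, add_tsub_cancel_right, add_zero, alphaMK_succ]
  push_cast
  field_simp
  ring

lemma integral_inv_mul_fOrd_two {M K : ℕ} (hM : 2 ≤ M) (hK : 2 ≤ K) :
    ∫ x in Ioi 0, x⁻¹ * fOrd M 2 K x
      = (K : ℝ) * alphaMK M (K - 1) - ((K : ℝ) - 1) * alphaMK M K := by
  obtain ⟨k, rfl⟩ := Nat.exists_eq_add_of_le' hK
  rw [integral_inv_mul_fOrd hM, integral_gammaDensDivX_mul_one_sub_regGamma_pow (by omega)]
  simp only [Finset.sum_range_succ, Finset.sum_range_zero, Nat.choose, Nat.factorial,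
    Nat.reduceSubDiff, add_tsub_cancel_right, add_zero, alphaMK_succ]
  push_cast
  field_simp
  ring

lemma integral_inv_mul_fOrd_three {M K : ℕ} (hM : 2 ≤ M) (hK : 3 ≤ K) :
    ∫ x in Ioi 0, x⁻¹ * fOrd M 3 K x
      = (K : ℝ) * ((K : ℝ) - 1) / 2 * alphaMK M (K - 2)
          - (K : ℝ) * ((K : ℝ) - 2) * alphaMK M (K - 1)
          + ((K : ℝ) - 1) * ((K : ℝ) - 2) / 2 * alphaMK M K := by
  obtain ⟨k, rfl⟩ := Nat.exists_eq_add_of_le' hK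
  rw [integral_inv_mul_fOrd hM, integral_gammaDensDivX_mul_one_sub_regGamma_pow (by omega)]
  simp only [Finset.sum_range_succ, Finset.sum_range_zero, Nat.choose, Nat.factorial,
    Nat.reduceSubDiff, add_tsub_cancel_right, add_zero, alphaMK_succ]
  push_cast
  field_simp
  ring

lemma integral_inv_mul_fOrd_four {M K : ℕ} (hM : 2 ≤ M) (hK : 4 ≤ K) :
    ∫ x in Ioi 0, x⁻¹ * fOrd M 4 K x
      = (K : ℝ) * ((K : ℝ) - 1) * ((K : ℝ) - 2) / 6 * alphaMK M (K - 3)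
          - (K : ℝ) * ((K : ℝ) - 1) * ((K : ℝ) - 3) / 2 * alphaMK M (K - 2)
          + (K : ℝ) * ((K : ℝ) - 2) * ((K : ℝ) - 3) / 2 * alphaMK M (K - 1)
          - ((K : ℝ) - 1) * ((K : ℝ) - 2) * ((K : ℝ) - 3) / 6 * alphaMK M K := by
  obtain ⟨k, rfl⟩ := Nat.exists_eq_add_of_le' hK
  rw [integral_inv_mul_fOrd hM, integral_gammaDensDivX_mul_one_sub_regGamma_pow (by omega)]
  simp only [Finset.sum_range_succ, Finset.sum_range_zero, Nat.choose, Nat.factorial,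
    Nat.reduceSubDiff, add_tsub_cancel_right, add_zero, alphaMK_succ]
  push_cast
  field_simp
  ring

end

/-- **Corollary 3 (NUS for 4 users).** Integral identity for the average minimum transmit
power `p_N(4)` when the four norm-strongest of `K` users are served (`M ≥ 5`, `K ≥ 4`). -/
theorem avg_min_power_NUS_four_users (M K : ℕ) (hM : 5 ≤ M) (hK : 4 ≤ K) :
    (∫ x in Set.Ioi (0:ℝ), x⁻¹ * fOrd M 4 K x) +
      (((M : ℝ) - 1) / ((M : ℝ) - 2) * ∫ x in Set.Ioi (0:ℝ), x⁻¹ * fOrd M 3 K x) +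
      (((M : ℝ) - 1) / ((M : ℝ) - 3) * ∫ x in Set.Ioi (0:ℝ), x⁻¹ * fOrd M 2 K x) +
      (((M : ℝ) - 1) / ((M : ℝ) - 4) * ∫ x in Set.Ioi (0:ℝ), x⁻¹ * fOrd M 1 K x)
    = ((M : ℝ) - 1) / ((M : ℝ) - 4) * alphaMK M K
      + ((M : ℝ) - 1) / ((M : ℝ) - 3) *
          ((K : ℝ) * alphaMK M (K - 1) - ((K : ℝ) - 1) * alphaMK M K)
      + ((M : ℝ) - 1) / ((M : ℝ) - 2) *
          ((K : ℝ) * ((K : ℝ) - 1) / 2 * alphaMK M (K - 2)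
            - (K : ℝ) * ((K : ℝ) - 2) * alphaMK M (K - 1)
            + ((K : ℝ) - 1) * ((K : ℝ) - 2) / 2 * alphaMK M K)
      + ((K : ℝ) * ((K : ℝ) - 1) * ((K : ℝ) - 2) / 6 * alphaMK M (K - 3)
          - (K : ℝ) * ((K : ℝ) - 1) * ((K : ℝ) - 3) / 2 * alphaMK M (K - 2)
          + (K : ℝ) * ((K : ℝ) - 2) * ((K : ℝ) - 3) / 2 * alphaMK M (K - 1)
          - ((K : ℝ) - 1) * ((K : ℝ) - 2) * ((K : ℝ) - 3) / 6 * alphaMK M K) := by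
  have hM2 : 2 ≤ M := by omega
  rw [integral_inv_mul_fOrd_four hM2 hK, integral_inv_mul_fOrd_three hM2 (by omega),
    integral_inv_mul_fOrd_two hM2 (by omega), integral_inv_mul_fOrd_one hM2 (by omega)]
  ring
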